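/- Let n ≥ 1, let V : ℝⁿ → ℝ be smooth and short range, and let Φ be a global Hamiltonian flow for V. Call a point z ∈ ℝⁿ × ℝⁿ non-trapped if, writing Φ(t,z) = (x(t,z), ξ(t,z)), one has ‖x(t,z)‖ → ∞ as t → +∞ and as t → −∞. Then the set { z ∈ ℝⁿ × ℝⁿ : p(z) > 0 and z is non-trapped } is open in ℝⁿ × ℝⁿ. -/

import Mathlib

open scoped RealInnerProductSpace
open Filter

noncomputable section

/-- Euclidean configuration space `ℝⁿ`. -/
abbrev Euc (n : ℕ) := EuclideanSpace ℝ (Fin n)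

/-- The Hamiltonian `p(x, ξ) = ½‖ξ‖² + V(x)` on phase space `ℝⁿ × ℝⁿ`. -/
def Ham (n : ℕ) (V : Euc n → ℝ) (z : Euc n × Euc n) : ℝ :=
  (1 / 2) * ‖z.2‖ ^ 2 + V z.1

/-- The Hamiltonian vector field `X_p(x, ξ) = (ξ, −∇V(x))`. -/
def HamVF (n : ℕ) (V : Euc n → ℝ) (z : Euc n × Euc n) : Euc n × Euc n :=
  (z.2, -gradient V z.1)

/-- `Φ` is a global Hamiltonian flow for the potential `V`: a smooth map
`ℝ × (ℝⁿ × ℝⁿ) → ℝⁿ × ℝⁿ` with `Φ 0 z = z`, `∂ₜΦ(t,z) = X_p(Φ(t,z))` and the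
group law `Φ(s+t, z) = Φ(s, Φ(t, z))`. -/
def IsGlobalHamFlow (n : ℕ) (V : Euc n → ℝ)
    (Φ : ℝ → Euc n × Euc n → Euc n × Euc n) : Prop :=
  ContDiff ℝ (⊤ : ℕ∞) (fun q : ℝ × (Euc n × Euc n) => Φ q.1 q.2) ∧
  (∀ z, Φ 0 z = z) ∧
  (∀ t z, HasDerivAt (fun s => Φ s z) (HamVF n V (Φ t z)) t) ∧
  (∀ s t z, Φ (s + t) z = Φ s (Φ t z))

namespace NontrappedAux

open Set

/-- Core escape lemma: a real function whose second derivative is at least `c > 0`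
whenever the function value is at least `R2`, and which at some time `t₀` exceeds
`R2` and has positive first derivative, tends to infinity. -/
lemma escape_lemma {f g h : ℝ → ℝ} {c R2 t₀ : ℝ} (hc : 0 < c)
    (hf : ∀ t, HasDerivAt f (g t) t)
    (hg : ∀ t, HasDerivAt g (h t) t)
    (hh : ∀ t, R2 ≤ f t → c ≤ h t)
    (h0 : R2 < f t₀) (hg0 : 0 < g t₀) :
    Tendsto f atTop atTop := by
  have hfc : Continuous f := by
    refine continuous_iff_continuousAt.2 fun t => (hf t).continuousAt
  have hgc : Continuous g := by
    refine continuous_iff_continuousAt.2 fun t => (hg t).continuousAt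
  -- Step 1 : f stays above R2 forever
  have step1 : ∀ t, t₀ ≤ t → R2 < f t := by
    by_contra hcon
    push_neg at hcon
    obtain ⟨t1, ht1, hft1⟩ := hcon
    set S : Set ℝ := {t | t₀ ≤ t ∧ f t ≤ R2} with hS
    have hSclosed : IsClosed S := (isClosed_Ici.preimage continuous_id).inter
      (isClosed_Iic.preimage hfc)
    have hSne : S.Nonempty := ⟨t1, ht1, hft1⟩
    have hSbdd : BddBelow S := ⟨t₀, fun s hs => hs.1⟩
    set τ := sInf S with hτ
    have hτS : τ ∈ S := hSclosed.csInf_mem hSne hSbdd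
    have hτ0 : t₀ < τ := by
      rcases hτS.1.lt_or_eq with h' | h'
      · exact h'
      · exact absurd hτS.2 (by rw [← h']; exact not_le.2 h0)
    have hlt : ∀ s, t₀ ≤ s → s < τ → R2 < f s := by
      intro s hs hsτ
      by_contra hns
      exact absurd (csInf_le hSbdd ⟨hs, not_lt.1 hns⟩) (not_le.2 hsτ)
    have hfτ : R2 ≤ f τ := by
      have htend : Tendsto f (nhdsWithin τ (Iio τ)) (nhds (f τ)) :=
        (hfc.continuousAt).continuousWithinAt
      refine ge_of_tendsto htend ?_
      filter_upwards [Ioo_mem_nhdsLT_of_mem (by exact ⟨hτ0, le_refl τ⟩ : τ ∈ Ioc t₀ τ)]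
        with s hs
      exact (hlt s hs.1.le hs.2).le
    have hIcc : ∀ s ∈ Icc t₀ τ, R2 ≤ f s := by
      intro s ⟨h1, h2⟩
      rcases h2.lt_or_eq with h' | h'
      · exact (hlt s h1 h').le
      · rw [h']; exact hfτ
    have hgm : StrictMonoOn g (Icc t₀ τ) := by
      refine strictMonoOn_of_deriv_pos (convex_Icc _ _) hgc.continuousOn ?_
      intro s hs
      rw [(hg s).deriv]
      exact hc.trans_le (hh s (hIcc s (interior_subset hs)))
    have hgpos : ∀ s ∈ Icc t₀ τ, 0 < g s := by
      intro s hs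
      rcases hs.1.lt_or_eq with h' | h'
      · exact hg0.trans (hgm (left_mem_Icc.2 hτ0.le) hs h')
      · rw [← h']; exact hg0
    have hfm : StrictMonoOn f (Icc t₀ τ) := by
      refine strictMonoOn_of_deriv_pos (convex_Icc _ _) hfc.continuousOn ?_
      intro s hs
      rw [(hf s).deriv]
      exact hgpos s (interior_subset hs)
    have : f t₀ < f τ := hfm (left_mem_Icc.2 hτ0.le) (right_mem_Icc.2 hτ0.le) hτ0
    exact absurd hτS.2 (not_le.2 (h0.trans this))
  -- Step 2 : linear growth of g
  have hct : ∀ t : ℝ, HasDerivAt (fun s => c * s) c t := by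
    intro t; simpa using (hasDerivAt_id t).const_mul c
  have step3 : ∀ t, t₀ ≤ t → g t₀ + c * (t - t₀) ≤ g t := by
    intro t ht
    have hmono : MonotoneOn (fun s => g s - c * s) (Ici t₀) := by
      refine monotoneOn_of_deriv_nonneg (convex_Ici _)
        (hgc.sub (continuous_const.mul continuous_id)).continuousOn
        (fun s hs => ((hg s).sub (hct s)).differentiableAt.differentiableWithinAt) ?_
      intro s hs
      rw [HasDerivAt.deriv (f := fun s => g s - c * s) ((hg s).sub (hct s))]
      have : c ≤ h s := hh s (step1 s (le_of_lt (by simpa using hs))).le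
      linarith
    have := hmono (self_mem_Ici) (mem_Ici.2 ht) ht
    simp only at this
    linarith
  -- Step 3 : quadratic growth of f
  have step4 : ∀ t, t₀ ≤ t → f t₀ + c / 2 * (t - t₀) ^ 2 ≤ f t := by
    intro t ht
    have hq : ∀ s : ℝ, HasDerivAt (fun u => c / 2 * (u - t₀) ^ 2) (c * (s - t₀)) s := by
      intro s
      have h1 : HasDerivAt (fun u : ℝ => (u - t₀) ^ 2) (2 * (s - t₀)) s := by
        have h0 := ((hasDerivAt_id s).sub_const t₀).pow 2; simp at h0; exact h0
      have := h1.const_mul (c / 2)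
      refine this.congr_deriv ?_
      ring
    have hmono : MonotoneOn (fun s => f s - c / 2 * (s - t₀) ^ 2) (Ici t₀) := by
      refine monotoneOn_of_deriv_nonneg (convex_Ici _)
        (Continuous.continuousOn (by continuity))
        (fun s hs => ((hf s).sub (hq s)).differentiableAt.differentiableWithinAt) ?_
      intro s hs
      rw [HasDerivAt.deriv (f := fun s => f s - c / 2 * (s - t₀) ^ 2) ((hf s).sub (hq s))]
      have hs' : t₀ ≤ s := le_of_lt (by simpa using hs)
      have := step3 s hs'
      linarith
    have := hmono (self_mem_Ici) (mem_Ici.2 ht) ht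
    simp only [sub_self] at this
    nlinarith [this]
  -- conclude
  have h1 : Tendsto (fun t : ℝ => t - t₀) atTop atTop :=
    tendsto_atTop_add_const_right _ _ tendsto_id
  have h2 : Tendsto (fun t : ℝ => (t - t₀) ^ 2) atTop atTop :=
    (tendsto_pow_atTop two_ne_zero).comp h1
  have h3 : Tendsto (fun t : ℝ => f t₀ + c / 2 * (t - t₀) ^ 2) atTop atTop :=
    tendsto_atTop_add_const_left _ _ (h2.const_mul_atTop (by positivity))
  refine tendsto_atTop_mono' atTop ?_ h3
  filter_upwards [eventually_ge_atTop t₀] with t ht using step4 t ht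

/-- If `u ≥ 0` and `u² → ∞` then `u → ∞`. -/
lemma tendsto_of_sq {α : Type*} {l : Filter α} {u : α → ℝ} (hu : ∀ t, 0 ≤ u t)
    (h : Tendsto (fun t => u t ^ 2) l atTop) : Tendsto u l atTop := by
  rw [tendsto_atTop]
  intro b
  filter_upwards [tendsto_atTop.1 h ((max b 0) ^ 2)] with t ht
  have h1 : max b 0 ≤ u t := by
    have := Real.sqrt_le_sqrt ht
    rwa [Real.sqrt_sq (le_max_right b 0), Real.sqrt_sq (hu t)] at this
  exact (le_max_left b 0).trans h1

variable {n : ℕ} {V : Euc n → ℝ} {Φ : ℝ → Euc n × Euc n → Euc n × Euc n}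

lemma flow_fst_deriv (hΦ : IsGlobalHamFlow n V Φ) (w : Euc n × Euc n) (t : ℝ) :
    HasDerivAt (fun s => (Φ s w).1) ((Φ t w).2) t := by
  have h := hΦ.2.2.1 t w
  have := (ContinuousLinearMap.fst ℝ (Euc n) (Euc n)).hasFDerivAt.comp_hasDerivAt t h
  simpa [HamVF, Function.comp_def] using this

lemma flow_snd_deriv (hΦ : IsGlobalHamFlow n V Φ) (w : Euc n × Euc n) (t : ℝ) :
    HasDerivAt (fun s => (Φ s w).2) (-gradient V (Φ t w).1) t := by
  have h := hΦ.2.2.1 t w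
  have := (ContinuousLinearMap.snd ℝ (Euc n) (Euc n)).hasFDerivAt.comp_hasDerivAt t h
  simpa [HamVF, Function.comp_def] using this

lemma hasDerivAt_V_comp (hV : ContDiff ℝ (⊤ : ℕ∞) V) {x : ℝ → Euc n} {x' : Euc n} {t : ℝ}
    (hx : HasDerivAt x x' t) :
    HasDerivAt (fun s => V (x s)) ⟪gradient V (x t), x'⟫ t := by
  have hg : HasGradientAt V (gradient V (x t)) (x t) :=
    ((hV.differentiable (by simp)) (x t)).hasGradientAt
  have := hg.hasFDerivAt.comp_hasDerivAt t hx
  simpa [InnerProductSpace.toDual_apply_apply, Function.comp_def] using this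

lemma energy_conserved (hΦ : IsGlobalHamFlow n V Φ) (hV : ContDiff ℝ (⊤ : ℕ∞) V)
    (w : Euc n × Euc n) (t : ℝ) : Ham n V (Φ t w) = Ham n V w := by
  have hd : ∀ s : ℝ, HasDerivAt (fun u => Ham n V (Φ u w)) 0 s := by
    intro s
    have hx := flow_fst_deriv hΦ w s
    have hξ := flow_snd_deriv hΦ w s
    have h1 : HasDerivAt (fun u => ⟪(Φ u w).2, (Φ u w).2⟫)
        (⟪(Φ s w).2, -gradient V (Φ s w).1⟫ + ⟪-gradient V (Φ s w).1, (Φ s w).2⟫) s :=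
      hξ.inner ℝ hξ
    have h2 : HasDerivAt (fun u => V ((Φ u w).1)) ⟪gradient V (Φ s w).1, (Φ s w).2⟫ s :=
      hasDerivAt_V_comp hV hx
    have h3 : HasDerivAt (fun u => (1 / 2 : ℝ) * ⟪(Φ u w).2, (Φ u w).2⟫ + V ((Φ u w).1)) _ s :=
      (h1.const_mul (1 / 2 : ℝ)).add h2
    have heq : (fun u => (1 / 2 : ℝ) * ⟪(Φ u w).2, (Φ u w).2⟫ + V ((Φ u w).1)) =
        fun u => Ham n V (Φ u w) := by
      funext u; rw [real_inner_self_eq_norm_sq]; rfl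
    rw [heq] at h3
    refine h3.congr_deriv ?_
    rw [inner_neg_left, inner_neg_right, real_inner_comm ((Φ s w).2)]
    ring
  have hconst : ∀ a b : ℝ, Ham n V (Φ a w) = Ham n V (Φ b w) := by
    intro a b
    exact is_const_of_deriv_eq_zero (fun s => (hd s).differentiableAt)
      (fun s => (hd s).deriv) a b
  have := hconst t 0
  rwa [hΦ.2.1 w] at this

lemma radial_fst_deriv (hΦ : IsGlobalHamFlow n V Φ) (w : Euc n × Euc n) (t : ℝ) :
    HasDerivAt (fun s => ‖(Φ s w).1‖ ^ 2) (2 * ⟪(Φ t w).1, (Φ t w).2⟫) t := by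
  have hx := flow_fst_deriv hΦ w t
  have h1 := hx.inner ℝ hx
  have heq : (fun s => ⟪(Φ s w).1, (Φ s w).1⟫) = fun s => ‖(Φ s w).1‖ ^ 2 := by
    funext s; rw [real_inner_self_eq_norm_sq]
  rw [heq] at h1
  refine h1.congr_deriv ?_
  rw [real_inner_comm ((Φ t w).2)]
  ring

lemma radial_snd_deriv (hΦ : IsGlobalHamFlow n V Φ) (w : Euc n × Euc n) (t : ℝ) :
    HasDerivAt (fun s => 2 * ⟪(Φ s w).1, (Φ s w).2⟫)
      (2 * ‖(Φ t w).2‖ ^ 2 - 2 * ⟪(Φ t w).1, gradient V (Φ t w).1⟫) t := by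
  have h1 := ((flow_fst_deriv hΦ w t).inner ℝ (flow_snd_deriv hΦ w t)).const_mul (2 : ℝ)
  refine h1.congr_deriv ?_
  rw [inner_neg_right, real_inner_self_eq_norm_sq]
  ring

/-- The key lower bound on the second derivative of `‖x(t)‖²`. -/
lemma hw_bound (hΦ : IsGlobalHamFlow n V Φ) (hV : ContDiff ℝ (⊤ : ℕ∞) V)
    {w : Euc n × Euc n} {E R : ℝ} (hEw : E / 2 < Ham n V w)
    (hpot : ∀ y : Euc n, R ≤ ‖y‖ → 4 * |V y| + 2 * ‖y‖ * ‖gradient V y‖ ≤ E)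
    (t : ℝ) (hxt : R ≤ ‖(Φ t w).1‖) :
    E ≤ 2 * ‖(Φ t w).2‖ ^ 2 - 2 * ⟪(Φ t w).1, gradient V (Φ t w).1⟫ := by
  have hcons := energy_conserved hΦ hV w t
  have hCS := real_inner_le_norm (Φ t w).1 (gradient V (Φ t w).1)
  have hpb := hpot _ hxt
  have hVle : V (Φ t w).1 ≤ |V (Φ t w).1| := le_abs_self _
  have h2 : (1 / 2 : ℝ) * ‖(Φ t w).2‖ ^ 2 + V (Φ t w).1 = Ham n V w := hcons
  nlinarith [hCS, hpb, hVle, h2, hEw]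

lemma escape_forward (hΦ : IsGlobalHamFlow n V Φ) (hV : ContDiff ℝ (⊤ : ℕ∞) V)
    {w : Euc n × Euc n} {E R t₁ : ℝ} (hEpos : 0 < E) (hR : 0 ≤ R)
    (hEw : E / 2 < Ham n V w)
    (hpot : ∀ y : Euc n, R ≤ ‖y‖ → 4 * |V y| + 2 * ‖y‖ * ‖gradient V y‖ ≤ E)
    (hx : R < ‖(Φ t₁ w).1‖) (hg : 0 < ⟪(Φ t₁ w).1, (Φ t₁ w).2⟫) :
    Tendsto (fun t => ‖(Φ t w).1‖) atTop atTop := by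
  have hmain : Tendsto (fun t => ‖(Φ t w).1‖ ^ 2) atTop atTop := by
    refine escape_lemma (R2 := R ^ 2) (t₀ := t₁) hEpos
      (radial_fst_deriv hΦ w) (radial_snd_deriv hΦ w) ?_ ?_ (by linarith)
    · intro t ht
      have hxt : R ≤ ‖(Φ t w).1‖ := by
        have := Real.sqrt_le_sqrt ht
        rwa [Real.sqrt_sq hR, Real.sqrt_sq (norm_nonneg _)] at this
      exact hw_bound hΦ hV hEw hpot t hxt
    · exact pow_lt_pow_left₀ hx hR two_ne_zero
  exact tendsto_of_sq (fun t => norm_nonneg _) hmain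

lemma escape_backward (hΦ : IsGlobalHamFlow n V Φ) (hV : ContDiff ℝ (⊤ : ℕ∞) V)
    {w : Euc n × Euc n} {E R t₁ : ℝ} (hEpos : 0 < E) (hR : 0 ≤ R)
    (hEw : E / 2 < Ham n V w)
    (hpot : ∀ y : Euc n, R ≤ ‖y‖ → 4 * |V y| + 2 * ‖y‖ * ‖gradient V y‖ ≤ E)
    (hx : R < ‖(Φ t₁ w).1‖) (hg : ⟪(Φ t₁ w).1, (Φ t₁ w).2⟫ < 0) :
    Tendsto (fun t => ‖(Φ t w).1‖) atBot atTop := by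
  have hfd : ∀ t : ℝ, HasDerivAt (fun s : ℝ => ‖(Φ (-s) w).1‖ ^ 2)
      (-(2 * ⟪(Φ (-t) w).1, (Φ (-t) w).2⟫)) t := by
    intro t
    have h := (radial_fst_deriv hΦ w (-t)).comp t (hasDerivAt_neg t)
    simpa [Function.comp_def, mul_comm] using h
  have hgd : ∀ t : ℝ, HasDerivAt (fun s : ℝ => -(2 * ⟪(Φ (-s) w).1, (Φ (-s) w).2⟫))
      (2 * ‖(Φ (-t) w).2‖ ^ 2 - 2 * ⟪(Φ (-t) w).1, gradient V (Φ (-t) w).1⟫) t := by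
    intro t
    have h := ((radial_snd_deriv hΦ w (-t)).comp t (hasDerivAt_neg t)).neg
    simpa [Function.comp_def, mul_comm, Pi.neg_def] using h
  have hmain : Tendsto (fun t : ℝ => ‖(Φ (-t) w).1‖ ^ 2) atTop atTop := by
    refine escape_lemma (R2 := R ^ 2) (t₀ := -t₁) hEpos hfd hgd ?_ ?_ ?_
    · intro t ht
      have hxt : R ≤ ‖(Φ (-t) w).1‖ := by
        have := Real.sqrt_le_sqrt ht
        rwa [Real.sqrt_sq hR, Real.sqrt_sq (norm_nonneg _)] at this
      exact hw_bound hΦ hV hEw hpot (-t) hxt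
    · rw [neg_neg]
      exact pow_lt_pow_left₀ hx hR two_ne_zero
    · rw [neg_neg]
      linarith
  have hcomp : Tendsto (fun t : ℝ => ‖(Φ t w).1‖ ^ 2) atBot atTop := by
    have := hmain.comp (tendsto_neg_atBot_atTop : Tendsto (fun x : ℝ => -x) atBot atTop)
    simpa [Function.comp_def] using this
  exact tendsto_of_sq (fun t => norm_nonneg _) hcomp

end NontrappedAux

open NontrappedAux Set

/-- **Openness of the non-trapped set.**  For a smooth short-range potential `V`
with global Hamiltonian flow `Φ`, the set of points `z` of positive energy whose
trajectory escapes to spatial infinity both forwards and backwards in time is open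
in `ℝⁿ × ℝⁿ`. -/
theorem nontrapped_set_isOpen
    (n : ℕ) (hn : 1 ≤ n)
    (V : Euc n → ℝ) (hV : ContDiff ℝ (⊤ : ℕ∞) V)
    (C μ R₀ : ℝ) (hC : 0 < C) (hμ : 0 < μ) (hR₀ : 0 < R₀)
    (hVbd : ∀ x : Euc n, R₀ ≤ ‖x‖ → |V x| ≤ C * (1 + ‖x‖) ^ (-μ))
    (hgradbd : ∀ x : Euc n, R₀ ≤ ‖x‖ → ‖gradient V x‖ ≤ C * (1 + ‖x‖) ^ (-1 - μ))
    (Φ : ℝ → Euc n × Euc n → Euc n × Euc n) (hΦ : IsGlobalHamFlow n V Φ) :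
    IsOpen {z : Euc n × Euc n | 0 < Ham n V z ∧
      Tendsto (fun t => ‖(Φ t z).1‖) atTop atTop ∧
      Tendsto (fun t => ‖(Φ t z).1‖) atBot atTop} := by
  rw [isOpen_iff_forall_mem_open]
  rintro z ⟨hE, htop, hbot⟩
  set E := Ham n V z with hEdef
  -- continuity helpers
  have hVc : Continuous V := hV.continuous
  have hHamc : Continuous (Ham n V) := by
    unfold Ham
    exact (continuous_const.mul ((continuous_snd.norm).pow 2)).add (hVc.comp continuous_fst)
  have hΦc : ∀ t, Continuous (fun w => Φ t w) := by
    intro t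
    exact hΦ.1.continuous.comp (continuous_const.prodMk continuous_id)
  -- choice of R
  have hdecay : Tendsto (fun r : ℝ => 6 * C * (1 + r) ^ (-μ)) atTop (nhds 0) := by
    have h1 : Tendsto (fun r : ℝ => (1 + r)) atTop atTop :=
      tendsto_atTop_add_const_left _ _ tendsto_id
    have h2 := (tendsto_rpow_neg_atTop hμ).comp h1
    have h3 := h2.const_mul (6 * C)
    simpa using h3
  obtain ⟨R, hRR₀, hRpos, hRE⟩ :
      ∃ R : ℝ, R₀ ≤ R ∧ 0 < R ∧ ∀ r : ℝ, R ≤ r → 6 * C * (1 + r) ^ (-μ) ≤ E := by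
    obtain ⟨R', hR'⟩ := eventually_atTop.1
      ((hdecay.eventually_lt_const hE).and (eventually_ge_atTop (max R₀ 1)))
    refine ⟨max R' (max R₀ 1), ?_, ?_, ?_⟩
    · exact le_trans (le_max_left _ _) (le_max_right _ _)
    · exact lt_of_lt_of_le one_pos (le_trans (le_max_right _ _) (le_max_right _ _))
    · intro r hr
      exact (hR' r (le_trans (le_max_left _ _) hr)).1.le
  -- pointwise potential bound
  have hpot : ∀ y : Euc n, R ≤ ‖y‖ → 4 * |V y| + 2 * ‖y‖ * ‖gradient V y‖ ≤ E := by
    intro y hy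
    have hy0 : R₀ ≤ ‖y‖ := le_trans hRR₀ hy
    have h1 := hVbd y hy0
    have h2 := hgradbd y hy0
    have hb : (0 : ℝ) < 1 + ‖y‖ := by positivity
    have hs : (0 : ℝ) ≤ (1 + ‖y‖) ^ (-μ) := Real.rpow_nonneg hb.le _
    have hsplit : (1 + ‖y‖) ^ (-1 - μ) = (1 + ‖y‖)⁻¹ * (1 + ‖y‖) ^ (-μ) := by
      rw [show (-1 - μ) = (-1) + (-μ) by ring, Real.rpow_add hb, Real.rpow_neg_one]
    have hfrac : ‖y‖ * (1 + ‖y‖)⁻¹ ≤ 1 := by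
      rw [← div_eq_mul_inv]
      exact (div_le_one hb).2 (by linarith [norm_nonneg y])
    have key : 2 * ‖y‖ * ‖gradient V y‖ ≤ 2 * C * (1 + ‖y‖) ^ (-μ) := by
      have step : ‖y‖ * (C * (1 + ‖y‖) ^ (-1 - μ)) ≤ C * (1 + ‖y‖) ^ (-μ) := by
        rw [hsplit]
        have expand : ‖y‖ * (C * ((1 + ‖y‖)⁻¹ * (1 + ‖y‖) ^ (-μ)))
            = (‖y‖ * (1 + ‖y‖)⁻¹) * (C * (1 + ‖y‖) ^ (-μ)) := by ring
        rw [expand]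
        have hnn : (0 : ℝ) ≤ C * (1 + ‖y‖) ^ (-μ) := by positivity
        nlinarith [hfrac, hnn]
      have hmul : ‖y‖ * ‖gradient V y‖ ≤ ‖y‖ * (C * (1 + ‖y‖) ^ (-1 - μ)) :=
        mul_le_mul_of_nonneg_left h2 (norm_nonneg y)
      nlinarith [hmul, step]
    have := hRE ‖y‖ hy
    nlinarith [h1, key]
  have hE2 : E / 2 < Ham n V z := by rw [← hEdef]; linarith
  -- find good times
  obtain ⟨tp, hxp, hgp⟩ : ∃ t₁ : ℝ, R < ‖(Φ t₁ z).1‖ ∧ 0 < ⟪(Φ t₁ z).1, (Φ t₁ z).2⟫ := by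
    obtain ⟨T, hT⟩ := eventually_atTop.1 (htop.eventually_gt_atTop R)
    obtain ⟨t₂, ht₂⟩ := ((htop.eventually_gt_atTop ‖(Φ T z).1‖).and
      (eventually_ge_atTop (T + 1))).exists
    have hT2 : T < t₂ := by linarith [ht₂.2]
    have hcont : ContinuousOn (fun s => ‖(Φ s z).1‖ ^ 2) (Icc T t₂) := by
      refine Continuous.continuousOn ?_
      refine continuous_iff_continuousAt.2 fun s => (radial_fst_deriv hΦ z s).continuousAt
    obtain ⟨c, hcmem, hceq⟩ := exists_hasDerivAt_eq_slope
      (fun s => ‖(Φ s z).1‖ ^ 2) (fun s => 2 * ⟪(Φ s z).1, (Φ s z).2⟫) hT2 hcont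
      (fun s _ => radial_fst_deriv hΦ z s)
    refine ⟨c, hT c hcmem.1.le, ?_⟩
    have hsq : ‖(Φ T z).1‖ ^ 2 < ‖(Φ t₂ z).1‖ ^ 2 :=
      pow_lt_pow_left₀ ht₂.1 (norm_nonneg _) two_ne_zero
    have hslope : 0 < (‖(Φ t₂ z).1‖ ^ 2 - ‖(Φ T z).1‖ ^ 2) / (t₂ - T) :=
      div_pos (by linarith) (by linarith)
    linarith [hceq, hslope]
  obtain ⟨tm, hxm, hgm2⟩ : ∃ t₁ : ℝ, R < ‖(Φ t₁ z).1‖ ∧ ⟪(Φ t₁ z).1, (Φ t₁ z).2⟫ < 0 := by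
    obtain ⟨T, hT⟩ := eventually_atBot.1 (hbot.eventually_gt_atTop R)
    obtain ⟨t₂, ht₂⟩ := ((hbot.eventually_gt_atTop ‖(Φ T z).1‖).and
      (eventually_le_atBot (T - 1))).exists
    have hT2 : t₂ < T := by linarith [ht₂.2]
    have hcont : ContinuousOn (fun s => ‖(Φ s z).1‖ ^ 2) (Icc t₂ T) := by
      refine Continuous.continuousOn ?_
      refine continuous_iff_continuousAt.2 fun s => (radial_fst_deriv hΦ z s).continuousAt
    obtain ⟨c, hcmem, hceq⟩ := exists_hasDerivAt_eq_slope
      (fun s => ‖(Φ s z).1‖ ^ 2) (fun s => 2 * ⟪(Φ s z).1, (Φ s z).2⟫) hT2 hcont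
      (fun s _ => radial_fst_deriv hΦ z s)
    refine ⟨c, hT c hcmem.2.le, ?_⟩
    have hsq : ‖(Φ T z).1‖ ^ 2 < ‖(Φ t₂ z).1‖ ^ 2 :=
      pow_lt_pow_left₀ ht₂.1 (norm_nonneg _) two_ne_zero
    have hslope : (‖(Φ T z).1‖ ^ 2 - ‖(Φ t₂ z).1‖ ^ 2) / (T - t₂) < 0 :=
      div_neg_of_neg_of_pos (by linarith) (by linarith)
    linarith [hceq, hslope]
  -- the open neighborhood
  refine ⟨{w | E / 2 < Ham n V w ∧ (R < ‖(Φ tp w).1‖ ∧ 0 < ⟪(Φ tp w).1, (Φ tp w).2⟫) ∧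
      (R < ‖(Φ tm w).1‖ ∧ ⟪(Φ tm w).1, (Φ tm w).2⟫ < 0)}, ?_, ?_, ?_⟩
  · rintro w ⟨hw1, ⟨hw2, hw3⟩, hw4, hw5⟩
    refine ⟨by linarith, ?_, ?_⟩
    · exact escape_forward hΦ hV hE hRpos.le hw1 hpot hw2 hw3
    · exact escape_backward hΦ hV hE hRpos.le hw1 hpot hw4 hw5
  · have h1 : IsOpen {w : Euc n × Euc n | E / 2 < Ham n V w} :=
      isOpen_lt continuous_const hHamc
    have h2 : IsOpen {w : Euc n × Euc n | R < ‖(Φ tp w).1‖} :=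
      isOpen_lt continuous_const (continuous_fst.comp (hΦc tp)).norm
    have h3 : IsOpen {w : Euc n × Euc n | 0 < ⟪(Φ tp w).1, (Φ tp w).2⟫} :=
      isOpen_lt continuous_const
        ((continuous_fst.comp (hΦc tp)).inner (continuous_snd.comp (hΦc tp)))
    have h4 : IsOpen {w : Euc n × Euc n | R < ‖(Φ tm w).1‖} :=
      isOpen_lt continuous_const (continuous_fst.comp (hΦc tm)).norm
    have h5 : IsOpen {w : Euc n × Euc n | ⟪(Φ tm w).1, (Φ tm w).2⟫ < 0} :=
      isOpen_lt ((continuous_fst.comp (hΦc tm)).inner (continuous_snd.comp (hΦc tm)))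
        continuous_const
    exact h1.inter ((h2.inter h3).inter (h4.inter h5))
  · exact ⟨hE2, ⟨hxp, hgp⟩, hxm, hgm2⟩
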